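/- Let n ≥ 3 and let φ be a prime generalized P-encoding on n input variables of minimum size among all generalized P-encodings on n input variables. Then for every i ∈ [n], the set Q_{φ,i} of clauses of φ containing the literal ¬x_i has more than one element. -/

import Mathlib

/-- Variables are natural numbers. -/
abbrev Var : Type := ℕ

/-- A literal is a variable together with a polarity (`true` = positive). -/
abbrev Lit : Type := Var × Bool

/-- A clause is a finite set of literals. -/
abbrev Clause : Type := Finset Lit

/-- A CNF formula is a finite set of clauses; its size is its number of clauses. -/
abbrev CNF : Type := Finset Clause

/-- Evaluation of a literal under a (total) assignment. -/
def Lit.eval (τ : Var → Bool) (l : Lit) : Bool :=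
  if l.2 then τ l.1 else !(τ l.1)

/-- The negation of a literal. -/
def Lit.negate (l : Lit) : Lit := (l.1, !l.2)

/-- An assignment satisfies a clause if it makes at least one of its literals true. -/
def Clause.sat (τ : Var → Bool) (C : Clause) : Prop :=
  ∃ l ∈ C, Lit.eval τ l = true

/-- An assignment satisfies a CNF formula if it satisfies every clause. -/
def CNF.sat (τ : Var → Bool) (φ : CNF) : Prop :=
  ∀ C ∈ φ, Clause.sat τ C

/-- The set of variables occurring in a CNF formula. -/
def CNF.vars (φ : CNF) : Finset Var :=
  φ.sup (fun C => C.image Prod.fst)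

/-- The auxiliary variables of a formula whose input variables are `0, …, n-1`. -/
def CNF.auxVars (n : ℕ) (φ : CNF) : Finset Var :=
  CNF.vars φ \ Finset.range n

/-- `φ` encodes the Boolean function `f`, where the input variables `x_1, …, x_n`
are the variables `0, …, n-1`: for every assignment `τ` of the input variables,
`f τ = ⊤` iff `τ` extends to a total assignment satisfying `φ`. -/
def Encodes (n : ℕ) (f : (Fin n → Bool) → Bool) (φ : CNF) : Prop :=
  ∀ τ : Fin n → Bool,
    f τ = true ↔ ∃ σ : Var → Bool, (∀ i : Fin n, σ i.1 = τ i) ∧ CNF.sat σ φ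

/-- A generalized P-encoding on `n` input variables (the input variables being
`0, …, n-1`): (a) `φ ∧ x_i` is satisfiable for each input variable, and
(b) `φ ⊨ ¬x_i ∨ ¬x_j` for all distinct input variables. -/
def GenPEncoding (n : ℕ) (φ : CNF) : Prop :=
  (∀ i < n, ∃ σ : Var → Bool, σ i = true ∧ CNF.sat σ φ) ∧
  (∀ i < n, ∀ j < n, i ≠ j →
    ∀ σ : Var → Bool, CNF.sat σ φ → ¬(σ i = true ∧ σ j = true))

/-- `Qset φ i` is the set of clauses of `φ` containing the literal `¬x_i`. -/
def Qset (φ : CNF) (i : ℕ) : Finset Clause :=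
  φ.filter (fun C => ((i : Var), false) ∈ C)

/-- `φ` is prime if no CNF formula obtained from `φ` by removing a literal from
one of its clauses is a generalized P-encoding on `n` input variables. -/
def PrimeEncoding (n : ℕ) (φ : CNF) : Prop :=
  GenPEncoding n φ ∧
  ∀ C ∈ φ, ∀ l ∈ C, ¬ GenPEncoding n (insert (C.erase l) (φ.erase C))

/-- Regular form: for each input variable `x_i`, `|Q_{φ,i}| = 2`, the only input
variable occurring in the clauses of `Q_{φ,i}` is `x_i`, and each clause of
`Q_{φ,i}` has exactly two literals. -/
def RegularForm (n : ℕ) (φ : CNF) : Prop :=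
  ∀ i < n, (Qset φ i).card = 2 ∧
    (∀ C ∈ Qset φ i, ∀ l ∈ C, l.1 < n → l.1 = i) ∧
    (∀ C ∈ Qset φ i, C.card = 2)

/-- `Lset φ i` is the set of literals `e` such that the clause `{¬x_i, e}`
belongs to `φ`. -/
def Lset (φ : CNF) (i : ℕ) : Set Lit :=
  {e | ({((i : Var), false), e} : Clause) ∈ φ}


/-! By contradiction. A P-encoding contains a clause `C ∋ ¬x_i`, since otherwise setting `x_i` to
true in a model of `φ ∧ x_j` (`j ≠ i`) would give a model of `φ ∧ x_i ∧ x_j`. If `C` is the only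
such clause, the same flip shows that every literal of `C` other than `¬x_i` is false in every
model of `φ ∧ x_j`. Primality forces `C = {¬x_i, e}`, since a third literal could be dropped. So
`e` is equivalent to `x_i` in every model with a true input; hence the variable of `e` is not an
input, and substituting `x_i` for `e` in the other clauses of `φ` yields a smaller P-encoding. -/

open Function

lemma Lit.eval_negate (σ : Var → Bool) (l : Lit) : Lit.eval σ (Lit.negate l) = !Lit.eval σ l := by
  cases h : l.2 <;> simp [Lit.eval, Lit.negate, h]

lemma Lit.eval_update_of_ne {σ : Var → Bool} {x : Var} {c : Bool} {l : Lit} (h : l.1 ≠ x) :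
    Lit.eval (update σ x c) l = Lit.eval σ l := by
  simp [Lit.eval, update_of_ne h]

def Lit.subst (v : Var) (m : Lit) (l : Lit) : Lit :=
  if l.1 = v then (if l.2 then m else Lit.negate m) else l

def CNF.subst (v : Var) (m : Lit) (φ : CNF) : CNF :=
  φ.image (Finset.image (Lit.subst v m))

lemma Lit.eval_subst (σ : Var → Bool) (v : Var) (m l : Lit) :
    Lit.eval σ (Lit.subst v m l) = Lit.eval (update σ v (Lit.eval σ m)) l := by
  obtain ⟨x, c⟩ := l
  by_cases hx : x = v
  · subst hx
    cases c <;> simp only [Lit.subst, if_true, Bool.false_eq_true, if_false, Lit.eval_negate] <;>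
      simp [Lit.eval]
  · simp [Lit.subst, hx, Lit.eval_update_of_ne (show (x, c).1 ≠ v from hx)]

lemma CNF.sat_subst_iff (σ : Var → Bool) (v : Var) (m : Lit) (φ : CNF) :
    CNF.sat σ (CNF.subst v m φ) ↔ CNF.sat (update σ v (Lit.eval σ m)) φ := by
  simp only [CNF.sat, CNF.subst, Finset.forall_mem_image, Clause.sat, Finset.exists_mem_image,
    Lit.eval_subst]

lemma CNF.card_subst_le (v : Var) (m : Lit) (φ : CNF) : (CNF.subst v m φ).card ≤ φ.card :=
  Finset.card_image_le

lemma Clause.sat_update_true {σ : Var → Bool} {i : Var} {D : Clause} (hD : (i, false) ∉ D)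
    (hσ : Clause.sat σ D) : Clause.sat (update σ i true) D := by
  obtain ⟨⟨x, c⟩, hl, hev⟩ := hσ
  by_cases hx : x = i
  · subst hx
    cases c
    · exact absurd hl hD
    · exact ⟨(x, true), hl, by simp [Lit.eval]⟩
  · exact ⟨(x, c), hl, by rwa [Lit.eval_update_of_ne (show (x, c).1 ≠ i from hx)]⟩

lemma CNF.sat_update_true {σ : Var → Bool} {φ : CNF} {i : Var} (hσ : CNF.sat σ φ)
    (hQ : ∀ D ∈ Qset φ i, Clause.sat (update σ i true) D) : CNF.sat (update σ i true) φ := by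
  intro D hD
  by_cases hi : (i, false) ∈ D
  · exact hQ D (Finset.mem_filter.2 ⟨hD, hi⟩)
  · exact Clause.sat_update_true hi (hσ D hD)

lemma mem_of_qset_eq_singleton {φ : CNF} {i : ℕ} {C : Clause} (hQ : Qset φ i = {C}) :
    C ∈ φ ∧ (i, false) ∈ C :=
  Finset.mem_filter.1 (hQ ▸ Finset.mem_singleton_self C)

lemma exists_lt_ne_ne {n : ℕ} (hn : 3 ≤ n) (a b : ℕ) : ∃ k < n, k ≠ a ∧ k ≠ b := by
  by_contra! h
  have h0 := h 0
  have h1 := h 1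
  have h2 := h 2
  omega

namespace GenPEncoding

variable {n : ℕ} {φ : CNF} {i j : ℕ} {σ : Var → Bool}

lemma eq_false_of_eq_true (hφ : GenPEncoding n φ) (hi : i < n) (hj : j < n) (hij : i ≠ j)
    (hσ : CNF.sat σ φ) (hσj : σ j = true) : σ i = false := by
  by_contra h
  exact hφ.2 i hi j hj hij σ hσ ⟨by simpa using h, hσj⟩

lemma exists_qset_not_sat_update (hφ : GenPEncoding n φ) (hi : i < n) (hj : j < n)
    (hij : i ≠ j) (hσ : CNF.sat σ φ) (hσj : σ j = true) :
    ∃ D ∈ Qset φ i, ¬ Clause.sat (update σ i true) D := by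
  by_contra! h
  exact hφ.2 i hi j hj hij _ (CNF.sat_update_true hσ h)
    ⟨by simp, by rwa [update_of_ne hij.symm]⟩

lemma not_sat_update_of_qset_eq_singleton {C : Clause} (hφ : GenPEncoding n φ) (hi : i < n)
    (hj : j < n) (hij : i ≠ j) (hQ : Qset φ i = {C}) (hσ : CNF.sat σ φ) (hσj : σ j = true) :
    ¬ Clause.sat (update σ i true) C := by
  obtain ⟨D, hD, hD_unsat⟩ := hφ.exists_qset_not_sat_update hi hj hij hσ hσj
  obtain rfl : D = C := by simpa [hQ] using hD
  exact hD_unsat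

lemma eval_eq_of_qset_eq_pair {v : Var} {b : Bool} (hφ : GenPEncoding n φ) (hi : i < n)
    (hvi : v ≠ i) (hQ : Qset φ i = {{(i, false), (v, b)}}) (hσ : CNF.sat σ φ) (hj : j < n)
    (hσj : σ j = true) : Lit.eval σ (v, b) = σ i := by
  obtain rfl | hij := eq_or_ne i j
  · obtain ⟨l, hl, hev⟩ := hσ _ (mem_of_qset_eq_singleton hQ).1
    rcases Finset.mem_insert.1 hl with rfl | hl
    · simp [Lit.eval, hσj] at hev
    · obtain rfl := Finset.mem_singleton.1 hl
      rwa [hσj]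
  · have hunsat := hφ.not_sat_update_of_qset_eq_singleton hi hj hij hQ hσ hσj
    have hσi := hφ.eq_false_of_eq_true hi hj hij hσ hσj
    rw [hσi]
    by_contra hev
    exact hunsat ⟨(v, b), by simp, by
      rw [Lit.eval_update_of_ne (show (v, b).1 ≠ i from hvi)]; simpa using hev⟩

lemma le_var_of_qset_eq_pair {v : Var} {b : Bool} (hφ : GenPEncoding n φ) (hn : 3 ≤ n)
    (hi : i < n) (hvi : v ≠ i) (hQ : Qset φ i = {{(i, false), (v, b)}}) : n ≤ v := by
  by_contra! hv
  obtain ⟨k, hk, hki, hkv⟩ := exists_lt_ne_ne hn i v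
  obtain ⟨τ, hτi, hτ⟩ := hφ.1 i hi
  obtain ⟨ρ, hρk, hρ⟩ := hφ.1 k hk
  have hτe := hφ.eval_eq_of_qset_eq_pair hi hvi hQ hτ hi hτi
  have hρe := hφ.eval_eq_of_qset_eq_pair hi hvi hQ hρ hk hρk
  rw [hτi] at hτe
  rw [hφ.eq_false_of_eq_true hi hk hki.symm hρ hρk] at hρe
  cases b
  · exact hφ.2 v hv k hk hkv.symm ρ hρ ⟨by simpa [Lit.eval] using hρe, hρk⟩
  · exact hφ.2 i hi v hv hvi.symm τ hτ ⟨hτi, by simpa [Lit.eval] using hτe⟩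

lemma insert_erase_lit {C : Clause} {l : Lit} {τ : Var → Bool} (hφ : GenPEncoding n φ)
    (hi : i < n) (hC : C ∈ φ) (hiC : (i, false) ∈ C) (hl : l ≠ (i, false)) (hτ : CNF.sat τ φ)
    (hτi : τ i = true) (hτC : Clause.sat τ (C.erase l)) :
    GenPEncoding n (insert (C.erase l) (φ.erase C)) := by
  have hsat : ∀ σ, CNF.sat σ φ → Clause.sat σ (C.erase l) →
      CNF.sat σ (insert (C.erase l) (φ.erase C)) := by
    intro σ hσ hσC D hD
    rcases Finset.mem_insert.1 hD with rfl | hD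
    · exact hσC
    · exact hσ D (Finset.mem_of_mem_erase hD)
  refine ⟨fun j hj => ?_, fun a ha c hc hac σ hσ => hφ.2 a ha c hc hac σ fun D hD => ?_⟩
  · obtain rfl | hij := eq_or_ne i j
    · exact ⟨τ, hτi, hsat τ hτ hτC⟩
    · obtain ⟨σ, hσj, hσ⟩ := hφ.1 j hj
      refine ⟨σ, hσj, hsat σ hσ ⟨(i, false), Finset.mem_erase.2 ⟨hl.symm, hiC⟩, ?_⟩⟩
      simp [Lit.eval, hφ.eq_false_of_eq_true hi hj hij hσ hσj]
  · by_cases hDC : D = C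
    · subst hDC
      obtain ⟨l', hl', hev⟩ := hσ _ (Finset.mem_insert_self _ _)
      exact ⟨l', Finset.mem_of_mem_erase hl', hev⟩
    · exact hσ D (Finset.mem_insert_of_mem (Finset.mem_erase.2 ⟨hDC, hD⟩))

lemma subst_erase_of_qset_eq_pair {v : Var} {b : Bool} (hφ : GenPEncoding n φ) (hi : i < n)
    (hvn : n ≤ v) (hQ : Qset φ i = {{(i, false), (v, b)}}) :
    GenPEncoding n (CNF.subst v (i, b) (φ.erase {(i, false), (v, b)})) := by
  have hvi : v ≠ i := (hi.trans_le hvn).ne'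
  refine ⟨fun j hj => ?_, fun a ha c hc hac σ hσ => ?_⟩
  · obtain ⟨σ, hσj, hσ⟩ := hφ.1 j hj
    have hσe := hφ.eval_eq_of_qset_eq_pair hi hvi hQ hσ hj hσj
    have hσ_fix : update σ v (Lit.eval σ (i, b)) = σ := by
      refine update_eq_self_iff.2 ?_
      cases b <;> simp only [Lit.eval] at hσe ⊢ <;> simp [← hσe]
    refine ⟨σ, hσj, (CNF.sat_subst_iff _ _ _ _).2 ?_⟩
    rw [hσ_fix]
    exact fun D hD => hσ D (Finset.mem_of_mem_erase hD)
  · set σ' := update σ v (Lit.eval σ (i, b))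
    have hσ' : CNF.sat σ' φ := by
      intro D hD
      by_cases hDC : D = {(i, false), (v, b)}
      · subst hDC
        cases hσi : σ i
        · exact ⟨(i, false), by simp, by simp [Lit.eval, σ', update_of_ne hvi.symm, hσi]⟩
        · exact ⟨(v, b), by simp, by cases b <;> simp [Lit.eval, σ', hσi]⟩
      · exact (CNF.sat_subst_iff _ _ _ _).1 hσ D (Finset.mem_erase.2 ⟨hDC, hD⟩)
    have hav : a ≠ v := by omega
    have hcv : c ≠ v := by omega
    simpa [σ', update_of_ne hav, update_of_ne hcv] using hφ.2 a ha c hc hac σ' hσ'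

end GenPEncoding

lemma PrimeEncoding.eq_pair {n : ℕ} {φ : CNF} {i : ℕ} {C : Clause} {e : Lit} {τ : Var → Bool}
    (hφ : PrimeEncoding n φ) (hi : i < n) (hC : C ∈ φ) (hiC : (i, false) ∈ C) (heC : e ∈ C)
    (hτ : CNF.sat τ φ) (hτi : τ i = true) (hτe : Lit.eval τ e = true) : C = {(i, false), e} := by
  refine Finset.Subset.antisymm (fun l hl => ?_)
    (Finset.insert_subset hiC (Finset.singleton_subset_iff.2 heC))
  by_contra hl'
  simp only [Finset.mem_insert, Finset.mem_singleton, not_or] at hl'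
  exact hφ.2 C hC l hl (hφ.1.insert_erase_lit hi hC hiC hl'.1 hτ hτi
    ⟨e, Finset.mem_erase.2 ⟨Ne.symm hl'.2, heC⟩, hτe⟩)

/-- Let `n ≥ 3` and let `φ` be a prime generalized P-encoding on `n` input
variables of minimum size among all generalized P-encodings on `n` input
variables. Then for every `i ∈ [n]`, the set `Q_{φ,i}` has more than one
element. -/
theorem no_single_clause (n : ℕ) (hn : 3 ≤ n) (φ : CNF)
    (hprime : PrimeEncoding n φ)
    (hmin : ∀ ψ : CNF, GenPEncoding n ψ → φ.card ≤ ψ.card) :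
    ∀ i < n, 1 < (Qset φ i).card := by
  intro i hi
  by_contra! hcard
  have hφ := hprime.1
  obtain ⟨j, hj, hji, -⟩ := exists_lt_ne_ne hn i i
  obtain ⟨σ, hσj, hσ⟩ := hφ.1 j hj
  obtain ⟨D, hD, -⟩ := hφ.exists_qset_not_sat_update hi hj hji.symm hσ hσj
  obtain ⟨C, hQ⟩ := Finset.card_eq_one.1 (le_antisymm hcard (Finset.card_pos.2 ⟨D, hD⟩))
  obtain ⟨hC, hiC⟩ := mem_of_qset_eq_singleton hQ
  obtain ⟨τ, hτi, hτ⟩ := hφ.1 i hi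
  obtain ⟨⟨v, b⟩, heC, hτe⟩ := hτ C hC
  obtain rfl := hprime.eq_pair hi hC hiC heC hτ hτi hτe
  have hvi : v ≠ i := by
    rintro rfl
    cases b
    · simp [Lit.eval, hτi] at hτe
    · exact hφ.not_sat_update_of_qset_eq_singleton hi hj hji.symm hQ hσ hσj
        ⟨(v, true), by simp, by simp [Lit.eval]⟩
  have hvn := hφ.le_var_of_qset_eq_pair hn hi hvi hQ
  exact (hmin _ (hφ.subst_erase_of_qset_eq_pair hi hvn hQ)).not_gt
    ((CNF.card_subst_le _ _ _).trans_lt (Finset.card_erase_lt_of_mem hC))
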